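/- arXiv:2105.13885 — 6 statements merged into one kernel-verified Lean document; each statement's English description precedes it below -/
import Mathlib

section
/- Let (g, τ, λ) be a conformal Yamabe soliton on an n-dimensional Riemannian manifold with respect to the Levi-Civita connection, where τ is concircular (∇_X τ = φX). Then λ = r - φ + (1/2)(p + 2/n). -/
open scoped RealInnerProductSpace

/-- Conformal Yamabe soliton with concircular potential vector field (`∇_X τ = φ X`):
then `λ = r - φ + (1/2)(p + 2/n)`. -/
theorem conformal_yamabe_concircular
    {n : ℕ} (hn : 0 < n)
    {E : Type*} [NormedAddCommGroup E] [InnerProductSpace ℝ E]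
    (b : OrthonormalBasis (Fin n) ℝ E)
    (τ : E) (φ r lam p : ℝ) (nabla : E →ₗ[ℝ] E)
    (hconc : ∀ X : E, nabla X = φ • X)
    (hsol : ∀ X Y : E,
      (⟪nabla X, Y⟫ + ⟪X, nabla Y⟫)
        + (2 * lam - 2 * r - (p + 2 / (n : ℝ))) * ⟪X, Y⟫ = 0) :
    lam = r - φ + (1 / 2) * (p + 2 / (n : ℝ)) := by
  set e := b ⟨0, hn⟩ with he
  have h1 : ⟪e, e⟫ = 1 := by
    rw [real_inner_self_eq_norm_sq, b.orthonormal.1 ⟨0, hn⟩]; norm_num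
  have h := hsol e e
  rw [hconc, real_inner_smul_left, real_inner_smul_right, h1] at h
  linarith
end

section
/- Let (g, τ, λ) be a conformal Yamabe soliton on an n-dimensional Riemannian manifold with τ concurrent (∇_X τ = X for all X). Then λ = r - 1 + (1/2)(p + 2/n). -/
open scoped RealInnerProductSpace

/-- Conformal Yamabe soliton with concurrent potential vector field (`∇_X τ = X`):
then `λ = r - 1 + (1/2)(p + 2/n)`. -/
theorem conformal_yamabe_concurrent
    {n : ℕ} (hn : 0 < n)
    {E : Type*} [NormedAddCommGroup E] [InnerProductSpace ℝ E]
    (b : OrthonormalBasis (Fin n) ℝ E)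
    (τ : E) (r lam p : ℝ) (nabla : E →ₗ[ℝ] E)
    (hconc : ∀ X : E, nabla X = X)
    (hsol : ∀ X Y : E,
      (⟪nabla X, Y⟫ + ⟪X, nabla Y⟫)
        + (2 * lam - 2 * r - (p + 2 / (n : ℝ))) * ⟪X, Y⟫ = 0) :
    lam = r - 1 + (1 / 2) * (p + 2 / (n : ℝ)) := by
  have i : Fin n := ⟨0, hn⟩
  have h := hsol (b i) (b i)
  rw [hconc] at h
  have h1 : ⟪b i, b i⟫ = 1 := by
    rw [real_inner_self_eq_norm_sq, b.orthonormal.1 i]; norm_num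
  rw [h1] at h
  linarith
end

section
/- Let (M,g) be an n-dimensional Riemannian manifold with semi-symmetric metric connection ∇̄_X Y = ∇_X Y + π(Y)X - g(X,Y)ρ, and let τ be a torse-forming vector field (∇_X τ = φX + α(X)τ). If (£̄_τ g) + [2λ - 2r̄ - (p + 2/n)] g = 0, where r̄ = r - 2(n-1)a is the scalar curvature of ∇̄, then λ = r - φ - 2(n-1)a + (1/2)(p + 2/n) - ((n-1)/n) π(τ) - α(τ)/n. -/
/-!
Tracing the soliton equation over an orthonormal frame gives
`2 div̄ τ + n (2λ - 2r̄ - p - 2/n) = 0`, and for a torse-forming `τ` the divergence with respect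
to `∇̄` is the trace of `X ↦ (φ + π(τ)) X + α(X) τ - g(X, τ) ρ`, namely `n φ + α(τ) + (n - 1) π(τ)`.
-/

open scoped RealInnerProductSpace

open Module LinearMap

section

variable {E : Type*} [NormedAddCommGroup E] [InnerProductSpace ℝ E] [FiniteDimensional ℝ E]

theorem LinearMap.two_mul_trace_add_eq_zero_of_inner_add_inner_add_eq_zero (T : E →ₗ[ℝ] E)
    (c : ℝ) (hT : ∀ X Y : E, ⟪T X, Y⟫ + ⟪X, T Y⟫ + c * ⟪X, Y⟫ = 0) :
    2 * trace ℝ E T + finrank ℝ E * c = 0 := by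
  let b := stdOrthonormalBasis ℝ E
  have hdiag (i) : 2 * ⟪b i, T (b i)⟫ = -c := by
    have := hT (b i) (b i)
    rw [real_inner_comm, ← two_mul, real_inner_self_eq_norm_sq, b.orthonormal.1 i, one_pow,
      mul_one] at this
    linarith
  rw [trace_eq_sum_inner T b, Finset.mul_sum, Finset.sum_congr rfl fun i _ => hdiag i,
    Finset.sum_const, Finset.card_univ, ← finrank_eq_card_basis b.toBasis, nsmul_eq_mul]
  ring

theorem LinearMap.trace_eq_of_apply_eq_smul_add_sub (T : E →ₗ[ℝ] E) (k : ℝ) (α : E →ₗ[ℝ] ℝ)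
    (τ ρ : E) (hT : ∀ X : E, T X = k • X + α X • τ - ⟪X, τ⟫ • ρ) :
    trace ℝ E T = finrank ℝ E * k + α τ - ⟪τ, ρ⟫ := by
  have hT' : T = k • id + α.smulRight τ - (innerₗ E τ).smulRight ρ := by
    ext X
    simp [hT, real_inner_comm]
  simp [hT', trace_id, mul_comm]

end

/-- Conformal Yamabe soliton w.r.t. the semi-symmetric metric connection
`∇̄_X Y = ∇_X Y + π(Y)X - g(X,Y)ρ`, `π(X)=g(X,ρ)`, with torse-forming potential
vector field `τ` (`∇_X τ = φ X + α(X) τ`) and scalar curvature `r̄ = r - 2(n-1)a`.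
If `(£̄_τ g) + [2λ - 2r̄ - (p + 2/n)] g = 0` then
`λ = r - φ - 2(n-1)a + (1/2)(p + 2/n) - ((n-1)/n)π(τ) - α(τ)/n`. -/
theorem conformal_yamabe_semi_symmetric
    {n : ℕ} (hn : 0 < n)
    {E : Type*} [NormedAddCommGroup E] [InnerProductSpace ℝ E]
    (b : OrthonormalBasis (Fin n) ℝ E)
    (τ ρ : E) (φ r a lam p : ℝ) (α : E →ₗ[ℝ] ℝ)
    (nabla barnabla : E →ₗ[ℝ] E)
    (htf : ∀ X : E, nabla X = φ • X + α X • τ)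
    (hbar : ∀ X : E, barnabla X = nabla X + ⟪τ, ρ⟫ • X - ⟪X, τ⟫ • ρ)
    (hsol : ∀ X Y : E,
      (⟪barnabla X, Y⟫ + ⟪X, barnabla Y⟫)
        + (2 * lam - 2 * (r - 2 * ((n : ℝ) - 1) * a) - (p + 2 / (n : ℝ))) * ⟪X, Y⟫ = 0) :
    lam = r - φ - 2 * ((n : ℝ) - 1) * a + (1 / 2) * (p + 2 / (n : ℝ))
        - (((n : ℝ) - 1) / (n : ℝ)) * ⟪τ, ρ⟫ - α τ / (n : ℝ) := by
  have : FiniteDimensional ℝ E := Module.Finite.of_basis b.toBasis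
  have hdim : finrank ℝ E = n := by simpa using finrank_eq_card_basis b.toBasis
  have htrace := barnabla.trace_eq_of_apply_eq_smul_add_sub (φ + ⟪τ, ρ⟫) α τ ρ fun X => by
    rw [hbar, htf]; module
  have hkilling := barnabla.two_mul_trace_add_eq_zero_of_inner_add_inner_add_eq_zero _ hsol
  rw [htrace, hdim] at hkilling
  have hn' : (n : ℝ) ≠ 0 := Nat.cast_ne_zero.mpr hn.ne'
  field_simp at hkilling ⊢
  linear_combination hkilling
end

section
/- Let (M,g) be an n-dimensional Riemannian manifold with projective semi-symmetric connection ∇̃ and let τ be a torse-forming vector field (∇_X τ = φX + α(X)τ). If (£̃_τ g) + [2λ - 2r̃ - (p + 2/n)] g = 0, where r̃ = r + Tr(θ) - (n-1)Tr(ω), then λ = r - φ + Tr(θ) - (n-1)Tr(ω) + (1/2)(p + 2/n) - ((n-1)/n)π(τ) - α(τ)/n. -/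
/-!
Taking `X = Y = eᵢ` in the soliton equation and summing over an orthonormal frame gives
`2 tr ∇̃τ + n (2λ - 2r̃ - (p + 2/n)) = 0`. For a torse-forming `τ` the map `X ↦ ∇̃_X τ` is a multiple
of the identity plus a rank-one map `X ↦ f(X) τ`, so its trace is `nφ + α(τ) + (n-1)π(τ)`: the
coefficients of `π(τ)` combine as `(n+1)·(n-1)/(2(n+1)) + (n-1)/2 = n-1`.
-/

open scoped RealInnerProductSpace

namespace LinearMap

lemma trace_eq_of_apply_eq_smul_add_smul {R M : Type*} [CommRing R] [AddCommGroup M] [Module R M]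
    [Module.Free R M] [Module.Finite R M] {T : M →ₗ[R] M} (a : R) (f : M →ₗ[R] R) (v : M)
    (hT : ∀ X, T X = a • X + f X • v) :
    trace R M T = a * Module.finrank R M + f v := by
  have hT' : T = a • LinearMap.id + f.smulRight v := LinearMap.ext fun X => by simp [hT]
  simp [hT']

lemma two_mul_trace_eq_of_inner_add_inner {E ι : Type*} [NormedAddCommGroup E]
    [InnerProductSpace ℝ E] [Fintype ι] (b : OrthonormalBasis ι ℝ E) {T : E →ₗ[ℝ] E} {c : ℝ}
    (h : ∀ X, ⟪T X, X⟫ + ⟪X, T X⟫ = c * ⟪X, X⟫) :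
    2 * trace ℝ E T = c * Fintype.card ι := by
  have hdiag : ∀ i, 2 * ⟪b i, T (b i)⟫ = c := fun i => by
    have hi := h (b i)
    rw [real_inner_self_eq_norm_sq, b.orthonormal.1 i, real_inner_comm (b i) (T (b i))] at hi
    linear_combination hi
  rw [trace_eq_sum_inner T b, Finset.mul_sum, Finset.sum_congr rfl fun i _ => hdiag i]
  simp [mul_comm]

end LinearMap

lemma trace_projective_semi_symmetric_of_torse_forming
    {n : ℕ} {E : Type*} [NormedAddCommGroup E] [InnerProductSpace ℝ E] [FiniteDimensional ℝ E]
    (hE : Module.finrank ℝ E = n) {τ ρ : E} {φ : ℝ} {α : E →ₗ[ℝ] ℝ}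
    {nabla tilnabla : E →ₗ[ℝ] E}
    (htf : ∀ X : E, nabla X = φ • X + α X • τ)
    (htil : ∀ X : E,
      tilnabla X = nabla X
        + (((n : ℝ) - 1) / (2 * ((n : ℝ) + 1)) * ⟪τ, ρ⟫) • X
        + (((n : ℝ) - 1) / (2 * ((n : ℝ) + 1)) * ⟪X, ρ⟫) • τ
        + ((1 / 2) * ⟪τ, ρ⟫) • X
        - ((1 / 2) * ⟪X, ρ⟫) • τ) :
    LinearMap.trace ℝ E tilnabla = n * φ + α τ + ((n : ℝ) - 1) * ⟪τ, ρ⟫ := by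
  set A : ℝ := ((n : ℝ) - 1) / (2 * ((n : ℝ) + 1))
  have hsplit : ∀ X, tilnabla X = (φ + (A + 1 / 2) * ⟪τ, ρ⟫) • X
      + (α + (A - 1 / 2) • innerₛₗ ℝ ρ) X • τ := fun X => by
    rw [htil, htf]
    simp only [LinearMap.add_apply, LinearMap.smul_apply, innerₛₗ_apply_apply, smul_eq_mul,
      real_inner_comm ρ X]
    module
  rw [LinearMap.trace_eq_of_apply_eq_smul_add_smul _ _ _ hsplit, hE]
  simp only [LinearMap.add_apply, LinearMap.smul_apply, innerₛₗ_apply_apply, smul_eq_mul,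
    real_inner_comm ρ τ, A]
  field_simp
  ring

/-- Conformal Yamabe soliton w.r.t. the projective semi-symmetric connection, with
torse-forming potential vector field `τ` (`∇_X τ = φ X + α(X) τ`),
`r̃ = r + Tr(θ) - (n-1) Tr(ω)` (`trθ`, `trω` are the traces of `θ`, `ω`). If
`(£̃_τ g) + [2λ - 2r̃ - (p + 2/n)] g = 0` then
`λ = r - φ + Tr(θ) - (n-1)Tr(ω) + (1/2)(p + 2/n) - ((n-1)/n)π(τ) - α(τ)/n`. -/
theorem conformal_yamabe_projective_semi_symmetric
    {n : ℕ} (hn : 0 < n)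
    {E : Type*} [NormedAddCommGroup E] [InnerProductSpace ℝ E]
    (b : OrthonormalBasis (Fin n) ℝ E)
    (τ ρ : E) (φ r trθ trω lam p : ℝ) (α : E →ₗ[ℝ] ℝ)
    (nabla tilnabla : E →ₗ[ℝ] E)
    (htf : ∀ X : E, nabla X = φ • X + α X • τ)
    (htil : ∀ X : E,
      tilnabla X = nabla X
        + (((n : ℝ) - 1) / (2 * ((n : ℝ) + 1)) * ⟪τ, ρ⟫) • X
        + (((n : ℝ) - 1) / (2 * ((n : ℝ) + 1)) * ⟪X, ρ⟫) • τ
        + ((1 / 2) * ⟪τ, ρ⟫) • X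
        - ((1 / 2) * ⟪X, ρ⟫) • τ)
    (hsol : ∀ X Y : E,
      (⟪tilnabla X, Y⟫ + ⟪X, tilnabla Y⟫)
        + (2 * lam - 2 * (r + trθ - ((n : ℝ) - 1) * trω) - (p + 2 / (n : ℝ))) * ⟪X, Y⟫ = 0) :
    lam = r - φ + trθ - ((n : ℝ) - 1) * trω + (1 / 2) * (p + 2 / (n : ℝ))
        - (((n : ℝ) - 1) / (n : ℝ)) * ⟪τ, ρ⟫ - α τ / (n : ℝ) := by
  have : FiniteDimensional ℝ E := b.toBasis.finiteDimensional_of_finite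
  have hE : Module.finrank ℝ E = n := by simpa using Module.finrank_eq_card_basis b.toBasis
  have htrace := LinearMap.two_mul_trace_eq_of_inner_add_inner b
    (c := -(2 * lam - 2 * (r + trθ - ((n : ℝ) - 1) * trω) - (p + 2 / (n : ℝ))))
    fun X => by linear_combination hsol X X
  rw [trace_projective_semi_symmetric_of_torse_forming hE htf htil, Fintype.card_fin] at htrace
  have hn' : (n : ℝ) ≠ 0 := by positivity
  field_simp at htrace ⊢
  linear_combination htrace
end

section
/- Let (g, τ, λ) be a *-Yamabe soliton on an n-dimensional Riemannian manifold with torse-forming potential vector field τ (∇_X τ = φX + α(X)τ), i.e., (1/2)£_τ g = (r* - λ)g. Then λ = r* - φ - α(τ)/n. -/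
open scoped RealInnerProductSpace

/-- `*`-Yamabe soliton `(1/2)£_τ g = (r* - λ) g` with torse-forming potential vector field
`τ` (`∇_X τ = φ X + α(X) τ`): then `λ = r* - φ - α(τ)/n`. -/
theorem star_yamabe_torse_forming
    {n : ℕ} (hn : 0 < n)
    {E : Type*} [NormedAddCommGroup E] [InnerProductSpace ℝ E]
    (b : OrthonormalBasis (Fin n) ℝ E)
    (τ : E) (φ rstar lam : ℝ) (α : E →ₗ[ℝ] ℝ) (nabla : E →ₗ[ℝ] E)
    (htf : ∀ X : E, nabla X = φ • X + α X • τ)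
    (hsol : ∀ X Y : E,
      (1 / 2) * (⟪nabla X, Y⟫ + ⟪X, nabla Y⟫) = (rstar - lam) * ⟪X, Y⟫) :
    lam = rstar - φ - α τ / (n : ℝ) := by
  have hbi : ∀ i : Fin n, ⟪b i, b i⟫ = 1 := fun i => by
    have := b.orthonormal.1 i
    rw [real_inner_self_eq_norm_sq, this]; norm_num
  have key : ∀ i : Fin n, rstar - lam = φ + α (b i) * ⟪b i, τ⟫ := by
    intro i
    have h := hsol (b i) (b i)
    rw [htf (b i)] at h
    rw [inner_add_left, inner_add_right, real_inner_smul_left, real_inner_smul_right,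
      real_inner_smul_left, real_inner_smul_right, hbi i, real_inner_comm (b i) τ] at h
    linarith
  have hsum : ∑ i : Fin n, (rstar - lam) = ∑ i : Fin n, (φ + α (b i) * ⟪b i, τ⟫) := by
    exact Finset.sum_congr rfl fun i _ => key i
  have hατ : ∑ i : Fin n, α (b i) * ⟪b i, τ⟫ = α τ := by
    conv_rhs => rw [← b.sum_repr τ]
    rw [map_sum]
    refine Finset.sum_congr rfl fun i _ => ?_
    rw [map_smul, b.repr_apply_apply, smul_eq_mul, mul_comm]
  rw [Finset.sum_const, Finset.sum_add_distrib, Finset.sum_const, hατ,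
    Finset.card_univ, Fintype.card_fin, nsmul_eq_mul, nsmul_eq_mul] at hsum
  have hn' : (n : ℝ) ≠ 0 := Nat.cast_ne_zero.mpr hn.ne'
  field_simp
  linarith [hsum]
end

section
/- If τ is a torqued vector field on an n-dimensional Riemannian manifold (∇_X τ = φX + α(X)τ with α(τ) = 0) and (g, τ, λ) is a conformal Yamabe soliton, then λ = r - φ + (1/2)(p + 2/n). -/
open scoped RealInnerProductSpace

/-- Conformal Yamabe soliton with torqued potential vector field
(`∇_X τ = φ X + α(X) τ` with `α(τ) = 0`): then `λ = r - φ + (1/2)(p + 2/n)`. -/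
theorem conformal_yamabe_torqued
    {n : ℕ} (hn : 0 < n)
    {E : Type*} [NormedAddCommGroup E] [InnerProductSpace ℝ E]
    (b : OrthonormalBasis (Fin n) ℝ E)
    (τ : E) (φ r lam p : ℝ) (α : E →ₗ[ℝ] ℝ) (nabla : E →ₗ[ℝ] E)
    (htf : ∀ X : E, nabla X = φ • X + α X • τ)
    (htq : α τ = 0)
    (hsol : ∀ X Y : E,
      (⟪nabla X, Y⟫ + ⟪X, nabla Y⟫)
        + (2 * lam - 2 * r - (p + 2 / (n : ℝ))) * ⟪X, Y⟫ = 0) :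
    lam = r - φ + (1 / 2) * (p + 2 / (n : ℝ)) := by
  set c : ℝ := 2 * lam - 2 * r - (p + 2 / (n : ℝ)) with hc
  have hone : ∀ i : Fin n, ⟪b i, b i⟫ = 1 := fun i => by
    rw [real_inner_self_eq_norm_mul_norm, b.orthonormal.1 i]; ring
  have hkey : ∀ i : Fin n,
      2 * φ + 2 * (α (b i) * ⟪τ, b i⟫) + c = 0 := by
    intro i
    have h := hsol (b i) (b i)
    rw [htf (b i)] at h
    simp only [inner_add_left, inner_add_right, inner_smul_left, inner_smul_right,
      RCLike.conj_to_real] at h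
    rw [hone i] at h
    have hsym : ⟪b i, τ⟫ = ⟪τ, b i⟫ := real_inner_comm _ _
    rw [hsym] at h; linarith
  have hsum : ∑ i : Fin n, (2 * φ + 2 * (α (b i) * ⟪τ, b i⟫) + c) = 0 := by
    simp [hkey]
  rw [Finset.sum_add_distrib, Finset.sum_add_distrib, Finset.sum_const,
    Finset.sum_const] at hsum
  have hατ : ∑ i : Fin n, α (b i) * ⟪τ, b i⟫ = 0 := by
    have hrepr : ∑ i : Fin n, ⟪b i, τ⟫ • b i = τ := by
      simpa [b.repr_apply_apply] using b.sum_repr τ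
    have : α (∑ i : Fin n, ⟪b i, τ⟫ • b i) = 0 := by rw [hrepr, htq]
    rw [map_sum] at this
    simp only [map_smul, smul_eq_mul] at this
    rw [← this]
    exact Finset.sum_congr rfl fun i _ => by rw [real_inner_comm]; ring
  rw [← Finset.mul_sum, hατ] at hsum
  simp only [smul_eq_mul, Finset.card_univ, Fintype.card_fin, mul_zero, add_zero] at hsum
  have hn' : (n : ℝ) ≠ 0 := Nat.cast_ne_zero.mpr hn.ne'
  have h2 : 2 * φ + c = 0 := by
    simp only [nsmul_eq_mul] at hsum
    have h3 : (n : ℝ) * (2 * φ + c) = 0 := by ring_nf; ring_nf at hsum; linarith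
    exact (mul_eq_zero.mp h3).resolve_left hn'
  rw [hc] at h2
  linarith
end
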